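/- Let h_1, …, h_B be B independent random masks on an n₁×n₂ grid (nB ≥ 2), each with i.i.d. entries equal to ±√(d/n) with probability 1/2 each, let A_t ∈ ℝ^{m×n} be the spatial-domain CCA sensing matrix built from h_t, and let A = [A_1 ⋯ A_B] ∈ ℝ^{m×nB}. Then for δ_s ∈ (0,1) and s ≥ 1, P(A does not satisfy RIP(s, δ_s)) ≤ 2 n² B² exp(−n δ_s² / (16 d s²)); in particular, for any c₂ ≤ δ_s²/16 and c₁ ≥ 3/c₂, if n/d ≥ c₁ s² log(nB) then this probability is strictly less than 1. -/

import Mathlib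

open Finset Matrix MeasureTheory ProbabilityTheory
open scoped ENNReal

/-- `f` has at most `s` nonzero entries. -/
def IsSparse {N : Type*} [Fintype N] [DecidableEq N] (s : ℕ) (f : N → ℝ) : Prop :=
  ∃ T : Finset N, T.card ≤ s ∧ ∀ i ∉ T, f i = 0

/-- `A` satisfies the Restricted Isometry Property of order `s` with constant `δ`. -/
def IsRIP {M N : Type*} [Fintype M] [Fintype N] [DecidableEq N]
    (A : Matrix M N ℝ) (s : ℕ) (δ : ℝ) : Prop :=
  ∀ f : N → ℝ, IsSparse s f →
    (1 - δ) * ∑ i, f i ^ 2 ≤ ∑ j, (A.mulVec f j) ^ 2 ∧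
      ∑ j, (A.mulVec f j) ^ 2 ≤ (1 + δ) * ∑ i, f i ^ 2

/-- The spatial-domain CCA sensing matrix built from a mask `h` on an `n₁ × n₂` grid. -/
def ccaMatrix (n₁ n₂ d₁ d₂ : ℕ) (h : ZMod n₁ → ZMod n₂ → ℝ) :
    Matrix (Fin (n₁ / d₁) × Fin (n₂ / d₂)) (ZMod n₁ × ZMod n₂) ℝ :=
  fun l k => h ((((l.1 : ℕ) * d₁ : ℕ) : ZMod n₁) - k.1) ((((l.2 : ℕ) * d₂ : ℕ) : ZMod n₂) - k.2)

/-- The CAKE sensing matrix `A = [A₁ ⋯ A_B]`. -/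
def cakeMatrix (n₁ n₂ d₁ d₂ B : ℕ) (h : Fin B → ZMod n₁ → ZMod n₂ → ℝ) :
    Matrix (Fin (n₁ / d₁) × Fin (n₂ / d₂)) (Fin B × (ZMod n₁ × ZMod n₂)) ℝ :=
  fun l tk => ccaMatrix n₁ n₂ d₁ d₂ (h tk.1) l tk.2

/-!
Distinct columns `α ≠ β` of the CAKE matrix have inner product `∑ₗ X (p l) X (q l)`, a sum of
products of two distinct independent signs `±c` (`c² = d / n`) along injective index maps `p`,
`q`, so each sign occurs in at most two terms. Integrating out one sign `X v` at a time
replaces `exp (λ X v W)` by `cosh (λ c W) ≤ exp (λ² c² W² / 2)`; by induction the inner product is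
sub-Gaussian with variance proxy `2 c⁴ (n / d) = 2 d / n`, so it exceeds `δ / s` with probability
at most `2 exp (-n δ² / (4 d s²))`. Columns are unit vectors, and pairwise inner products below
`δ / s` give RIP(s, δ) by Gershgorin; a union bound over the at most `(n B)²` pairs gives the
estimate. Under the hypotheses of the second claim the exponent `n δ² / (16 d s²)` is at least
`3 log (n B)` and `n B > 2`, so the bound is at most `2 / (n B) < 1`.
-/

open Real
open scoped NNReal

def IsScaledRademacher {Ω : Type*} [MeasurableSpace Ω] (μ : Measure Ω) (c : ℝ) (Z : Ω → ℝ) :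
    Prop :=
  μ {ω | Z ω = c} = 1 / 2 ∧ μ {ω | Z ω = -c} = 1 / 2

lemma abs_sinh_le_cosh (x : ℝ) : |sinh x| ≤ cosh x := by
  rw [abs_sinh, ← cosh_abs]; exact (sinh_lt_cosh _).le

lemma cosh_le_exp_of_abs_le {x a : ℝ} (h : |x| ≤ a) : cosh x ≤ exp (a ^ 2 / 2) :=
  (cosh_le_exp_half_sq x).trans <| exp_le_exp.2 <| by
    have := sq_le_sq.2 (h.trans (le_abs_self a))
    linarith

lemma exp_mul_eq_cosh_add_mul_sinh {x c : ℝ} (hx : x = c ∨ x = -c) (a : ℝ) :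
    exp (a * x) = cosh (a * c) + x * (sinh (a * c) / c) := by
  rcases eq_or_ne c 0 with rfl | hc
  · obtain rfl : x = 0 := by simpa using hx
    simp
  rcases hx with rfl | rfl
  · rw [mul_div_cancel₀ _ hc, cosh_add_sinh]
  · rw [neg_mul, mul_div_cancel₀ _ hc, ← sub_eq_add_neg, cosh_sub_sinh, mul_neg]

namespace IsScaledRademacher

variable {Ω : Type*} [MeasurableSpace Ω] {μ : Measure Ω} [IsProbabilityMeasure μ]
  {Z : Ω → ℝ} {c : ℝ}

lemma ae_eq_or_eq_neg (h : IsScaledRademacher μ c Z) (hc : c ≠ 0) (hZ : Measurable Z) :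
    ∀ᵐ ω ∂μ, Z ω = c ∨ Z ω = -c := by
  have hdisj : Disjoint {ω | Z ω = c} {ω | Z ω = -c} :=
    Set.disjoint_left.2 fun ω h₁ h₂ ↦ hc <| by
      have : c = -c := (h₁ : Z ω = c).symm.trans h₂
      linarith
  refine (ae_iff_measure_eq ?_).2 ?_
  · exact (hZ (measurableSet_singleton c)).union (hZ (measurableSet_singleton _))
      |>.nullMeasurableSet
  rw [Set.ofPred_or, measure_union hdisj (hZ (measurableSet_singleton _)), h.1, h.2,
    ENNReal.add_halves, measure_univ]

lemma integral_eq_zero (h : IsScaledRademacher μ c Z) (hc : c ≠ 0) (hZ : Measurable Z) :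
    ∫ ω, Z ω ∂μ = 0 := by
  set A := {ω | Z ω = c}
  set B := {ω | Z ω = -c}
  have hA : MeasurableSet A := hZ (measurableSet_singleton _)
  have hB : MeasurableSet B := hZ (measurableSet_singleton _)
  have hZ_eq : Z =ᵐ[μ] fun ω ↦ c * (A.indicator 1 ω - B.indicator 1 ω) := by
    filter_upwards [h.ae_eq_or_eq_neg hc hZ] with ω hω
    have hcc : c ≠ -c := fun h' ↦ hc (by linarith)
    rcases hω with hω | hω
    · have hωB : ω ∉ B := fun h' ↦ hcc (hω.symm.trans h')
      simp [A, Set.indicator_of_notMem hωB, hω]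
    · have hωA : ω ∉ A := fun h' ↦ hcc ((h' : Z ω = c).symm.trans hω)
      simp [B, Set.indicator_of_notMem hωA, hω]
  rw [integral_congr_ae hZ_eq, integral_const_mul,
    integral_sub ((integrable_const 1).indicator hA) ((integrable_const 1).indicator hB),
    integral_indicator_one hA, integral_indicator_one hB, measureReal_def, measureReal_def,
    h.1, h.2, sub_self, mul_zero]

end IsScaledRademacher

section Independence

variable {Ω ι γ β : Type*} [MeasurableSpace Ω] {μ : Measure Ω} [Fintype ι] [DecidableEq ι]
  [MeasurableSpace γ] [Nonempty γ] [MeasurableSpace β]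

lemma ProbabilityTheory.iIndepFun.indepFun_comp_of_dependsOn {X : ι → Ω → γ} (hX : iIndepFun X μ)
    (hXm : ∀ i, Measurable (X i)) {g : (ι → γ) → β} (hg : Measurable g) {v : ι}
    (hgv : DependsOn g {v}ᶜ) :
    IndepFun (fun ω ↦ g (fun i ↦ X i ω)) (X v) μ := by
  set T := Finset.univ.erase v
  let extend : (T → γ) → ι → γ := fun y i ↦
    if hi : i ∈ T then y ⟨i, hi⟩ else Classical.arbitrary γ
  have hextend : Measurable extend := measurable_pi_lambda _ fun i ↦ by
    by_cases hi : i ∈ T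
    · simpa [extend, hi] using measurable_pi_apply (⟨i, hi⟩ : T)
    · simp [extend, hi]
  have h := (hX.indepFun_finset T {v} (by simp [T]) hXm).comp (hg.comp hextend)
    (measurable_pi_apply ⟨v, Finset.mem_singleton_self v⟩)
  convert h using 1
  · funext ω
    refine hgv fun i hi ↦ ?_
    have hiT : i ∈ T := by simpa [T] using hi
    simp [extend, hiT]
  · rfl

end Independence

section ExpMoment

variable {Ω : Type*} [MeasurableSpace Ω] {μ : Measure Ω}

/-- Integrating out the sign `Z` first turns `exp (λ Z W)` into `cosh (λ c W)`. -/
lemma integral_exp_mul_add_mul_le {S W Z : Ω → ℝ} {c K : ℝ} (lam : ℝ) (hSm : Measurable S)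
    (hWm : Measurable W) (hZm : Measurable Z) (hind : IndepFun (fun ω ↦ (S ω, W ω)) Z μ)
    (hZ : ∀ᵐ ω ∂μ, Z ω = c ∨ Z ω = -c) (hZ_mean : ∫ ω, Z ω ∂μ = 0)
    (hS : Integrable (fun ω ↦ exp (lam * S ω)) μ) (hW : ∀ᵐ ω ∂μ, |W ω| ≤ K) :
    ∫ ω, exp (lam * (S ω + Z ω * W ω)) ∂μ
      ≤ exp ((lam * c * K) ^ 2 / 2) * ∫ ω, exp (lam * S ω) ∂μ := by
  set C := exp ((lam * c * K) ^ 2 / 2)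
  have hcosh : ∀ᵐ ω ∂μ, cosh (lam * c * W ω) ≤ C := by
    filter_upwards [hW] with ω hω
    have h := cosh_le_exp_of_abs_le (x := lam * c * W ω) (a := |lam * c| * K) <| by
      rw [abs_mul]; exact mul_le_mul_of_nonneg_left hω (abs_nonneg _)
    rwa [mul_pow, sq_abs, ← mul_pow] at h
  set φ : ℝ × ℝ → ℝ := fun y ↦ exp (lam * y.1) * (sinh (lam * c * y.2) / c)
  have hφm : Measurable φ := by fun_prop
  have h_split : (fun ω ↦ exp (lam * (S ω + Z ω * W ω))) =ᵐ[μ]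
      fun ω ↦ exp (lam * S ω) * cosh (lam * c * W ω) + φ (S ω, W ω) * Z ω := by
    filter_upwards [hZ] with ω hω
    rw [mul_add, exp_add, mul_comm (Z ω), ← mul_assoc,
      exp_mul_eq_cosh_add_mul_sinh hω]
    simp only [φ]; ring_nf
  have h_int₁ : Integrable (fun ω ↦ exp (lam * S ω) * cosh (lam * c * W ω)) μ := by
    refine hS.mul_bdd (by fun_prop) (c := C) ?_
    filter_upwards [hcosh] with ω hω
    rwa [Real.norm_eq_abs, abs_of_pos (cosh_pos _)]
  have h_int₂ : Integrable (fun ω ↦ φ (S ω, W ω) * Z ω) μ := by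
    have h_eq : (fun ω ↦ φ (S ω, W ω) * Z ω)
        = fun ω ↦ exp (lam * S ω) * (sinh (lam * c * W ω) / c * Z ω) := by
      funext ω; simp only [φ]; ring
    rw [h_eq]
    refine hS.mul_bdd (by fun_prop) (c := C) ?_
    filter_upwards [hcosh, hZ] with ω hω hZω
    calc ‖sinh (lam * c * W ω) / c * Z ω‖ ≤ |sinh (lam * c * W ω)| := by
          rcases eq_or_ne c 0 with rfl | hc
          · simp
          · rcases hZω with h | h <;> simp [h, hc]
      _ ≤ cosh (lam * c * W ω) := abs_sinh_le_cosh _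
      _ ≤ C := hω
  have h_zero : ∫ ω, φ (S ω, W ω) * Z ω ∂μ = 0 := by
    have h := (hind.comp hφm measurable_id).integral_fun_mul_eq_mul_integral
      (hφm.comp (hSm.prodMk hWm)).aestronglyMeasurable hZm.aestronglyMeasurable
    exact h.trans (by simp [hZ_mean])
  calc ∫ ω, exp (lam * (S ω + Z ω * W ω)) ∂μ
      = ∫ ω, exp (lam * S ω) * cosh (lam * c * W ω) ∂μ := by
        rw [integral_congr_ae h_split, integral_add h_int₁ h_int₂, h_zero, add_zero]
    _ ≤ ∫ ω, exp (lam * S ω) * C ∂μ := by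
        refine integral_mono_ae h_int₁ (hS.mul_const C) ?_
        filter_upwards [hcosh] with ω hω
        exact mul_le_mul_of_nonneg_left hω (exp_pos _).le
    _ = C * ∫ ω, exp (lam * S ω) ∂μ := by rw [integral_mul_const, mul_comm]

end ExpMoment

lemma Finset.card_filter_apply_eq_or_apply_eq_le_two {κ ι : Type*} [DecidableEq κ] [DecidableEq ι]
    {p q : κ → ι} {L : Finset κ} (hp : Set.InjOn p L) (hq : Set.InjOn q L) (v : ι) :
    #{l ∈ L | p l = v ∨ q l = v} ≤ 2 := by
  have h_le_one : ∀ {r : κ → ι}, Set.InjOn r L → #{l ∈ L | r l = v} ≤ 1 := fun hr ↦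
    Finset.card_le_one.2 fun a ha b hb ↦ by
      simp only [Finset.mem_filter] at ha hb
      exact hr ha.1 hb.1 (ha.2.trans hb.2.symm)
  rw [Finset.filter_or]
  exact (Finset.card_union_le _ _).trans (add_le_add (h_le_one hp) (h_le_one hq))

lemma Finset.exists_sum_mul_eq_sum_sdiff_add_mul_sum {κ ι R : Type*} [DecidableEq κ]
    [DecidableEq ι] [CommSemiring R] {p q : κ → ι} {L : Finset κ} (hpq : ∀ l ∈ L, p l ≠ q l)
    (v : ι) :
    ∃ r : κ → ι, (∀ l ∈ {l ∈ L | p l = v ∨ q l = v}, r l ≠ v) ∧ ∀ x : ι → R,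
      ∑ l ∈ L, x (p l) * x (q l) = ∑ l ∈ L \ {l ∈ L | p l = v ∨ q l = v}, x (p l) * x (q l)
        + x v * ∑ l ∈ {l ∈ L | p l = v ∨ q l = v}, x (r l) := by
  refine ⟨fun l ↦ if q l = v then p l else q l, fun l hl ↦ ?_, fun x ↦ ?_⟩
  · simp only [Finset.mem_filter] at hl
    by_cases h : q l = v
    · simpa [h] using hpq l hl.1
    · simp [h]
  rw [← Finset.sum_sdiff (Finset.filter_subset (fun l ↦ p l = v ∨ q l = v) L), Finset.mul_sum]
  congr 1
  refine Finset.sum_congr rfl fun l hl ↦ ?_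
  simp only [Finset.mem_filter] at hl
  by_cases h : q l = v
  · simp [h, mul_comm]
  · simp [h, hl.2.resolve_right h]

lemma abs_sum_le_card_mul {κ : Type*} {L : Finset κ} {f : κ → ℝ} {C : ℝ}
    (h : ∀ l ∈ L, |f l| ≤ C) : |∑ l ∈ L, f l| ≤ #L * C := by
  rw [← nsmul_eq_mul]
  exact (Finset.abs_sum_le_sum_abs _ _).trans (Finset.sum_le_card_nsmul _ _ _ h)

section Chaos

variable {Ω ι κ : Type*} [MeasurableSpace Ω] {μ : Measure Ω} [IsProbabilityMeasure μ]
  [Fintype ι] {X : ι → Ω → ℝ} {c : ℝ}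

lemma integrable_exp_mul_of_ae_abs_le {S : Ω → ℝ} {K : ℝ} (hSm : Measurable S)
    (hS : ∀ᵐ ω ∂μ, |S ω| ≤ K) (lam : ℝ) : Integrable (fun ω ↦ exp (lam * S ω)) μ := by
  refine .of_bound (by fun_prop) (exp (|lam| * K)) ?_
  filter_upwards [hS] with ω hω
  rw [Real.norm_of_nonneg (exp_pos _).le, exp_le_exp]
  calc lam * S ω ≤ |lam| * |S ω| := by rw [← abs_mul]; exact le_abs_self _
    _ ≤ |lam| * K := mul_le_mul_of_nonneg_left hω (abs_nonneg _)

lemma ae_forall_abs_eq (hc : c ≠ 0) (hXm : ∀ i, Measurable (X i))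
    (hXr : ∀ i, IsScaledRademacher μ c (X i)) : ∀ᵐ ω ∂μ, ∀ i, |X i ω| = |c| := by
  filter_upwards [ae_all_iff.2 fun i ↦ (hXr i).ae_eq_or_eq_neg hc (hXm i)] with ω hω i
  rcases hω i with h | h <;> simp [h]

lemma ae_abs_sum_mul_le (hc : c ≠ 0) (hXm : ∀ i, Measurable (X i))
    (hXr : ∀ i, IsScaledRademacher μ c (X i)) (p q : κ → ι) (L : Finset κ) :
    ∀ᵐ ω ∂μ, |∑ l ∈ L, X (p l) ω * X (q l) ω| ≤ #L * c ^ 2 := by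
  filter_upwards [ae_forall_abs_eq hc hXm hXr] with ω hω
  exact abs_sum_le_card_mul fun l _ ↦ by rw [abs_mul, hω, hω, ← sq, sq_abs]

variable [DecidableEq ι]

lemma integral_exp_mul_sum_add_mul_sum_le (hc : c ≠ 0) (hXm : ∀ i, Measurable (X i))
    (hX : iIndepFun X μ) (hXr : ∀ i, IsScaledRademacher μ c (X i)) {p q r : κ → ι} (lam : ℝ)
    {L M : Finset κ} {v : ι} (hLv : ∀ l ∈ L, p l ≠ v ∧ q l ≠ v) (hMv : ∀ l ∈ M, r l ≠ v) :
    ∫ ω, exp (lam * (∑ l ∈ L, X (p l) ω * X (q l) ω + X v ω * ∑ l ∈ M, X (r l) ω)) ∂μ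
      ≤ exp (lam ^ 2 * c ^ 4 * #M ^ 2 / 2)
        * ∫ ω, exp (lam * ∑ l ∈ L, X (p l) ω * X (q l) ω) ∂μ := by
  have hind : IndepFun (fun ω ↦ (∑ l ∈ L, X (p l) ω * X (q l) ω, ∑ l ∈ M, X (r l) ω)) (X v) μ := by
    refine hX.indepFun_comp_of_dependsOn hXm
      (g := fun x ↦ (∑ l ∈ L, x (p l) * x (q l), ∑ l ∈ M, x (r l))) (by fun_prop) ?_
    intro x y hxy
    simp only [Set.mem_compl_singleton_iff] at hxy
    refine Prod.ext (Finset.sum_congr rfl fun l hl ↦ ?_)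
      (Finset.sum_congr rfl fun l hl ↦ hxy _ (hMv l hl))
    rw [hxy _ (hLv l hl).1, hxy _ (hLv l hl).2]
  have hW : ∀ᵐ ω ∂μ, |∑ l ∈ M, X (r l) ω| ≤ #M * |c| := by
    filter_upwards [ae_forall_abs_eq hc hXm hXr] with ω hω
    exact abs_sum_le_card_mul fun l _ ↦ (hω _).le
  refine (integral_exp_mul_add_mul_le lam (by fun_prop) (by fun_prop) (hXm v) hind
    ((hXr v).ae_eq_or_eq_neg hc (hXm v)) ((hXr v).integral_eq_zero hc (hXm v))
    (integrable_exp_mul_of_ae_abs_le (by fun_prop) (ae_abs_sum_mul_le hc hXm hXr p q L) lam)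
    hW).trans_eq ?_
  rw [mul_pow, mul_pow, mul_pow, sq_abs]
  ring_nf

theorem integral_exp_mul_sum_mul_le (hc : c ≠ 0) (hXm : ∀ i, Measurable (X i))
    (hX : iIndepFun X μ) (hXr : ∀ i, IsScaledRademacher μ c (X i)) {p q : κ → ι} (lam : ℝ)
    (L : Finset κ) (hp : Set.InjOn p L) (hq : Set.InjOn q L) (hpq : ∀ l ∈ L, p l ≠ q l) :
    ∫ ω, exp (lam * ∑ l ∈ L, X (p l) ω * X (q l) ω) ∂μ ≤ exp (lam ^ 2 * c ^ 4 * #L) := by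
  classical
  induction L using Finset.strongInduction with
  | H L ih =>
  rcases L.eq_empty_or_nonempty with rfl | ⟨l₀, hl₀⟩
  · simp
  -- Peel off the terms containing the sign `X v`; by injectivity of `p` and `q` there are
  -- at most two.
  set v := q l₀
  set M := {l ∈ L | p l = v ∨ q l = v}
  set L' := L \ M
  obtain ⟨r, hr, h_split⟩ := Finset.exists_sum_mul_eq_sum_sdiff_add_mul_sum (R := ℝ) hpq v
  have hML : M ⊆ L := Finset.filter_subset _ _
  have hL'L : L' ⊆ L := Finset.sdiff_subset
  have hL'v : ∀ l ∈ L', p l ≠ v ∧ q l ≠ v := fun l hl ↦ by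
    simp only [L', M, Finset.mem_sdiff, Finset.mem_filter, not_and, not_or] at hl
    exact hl.2 hl.1
  have hM_card : (#M : ℝ) ≤ 2 := by
    exact_mod_cast Finset.card_filter_apply_eq_or_apply_eq_le_two hp hq v
  have h_card : (#L' : ℝ) + #M = #L := by
    exact_mod_cast Finset.card_sdiff_add_card_eq_card hML
  have hl₀M : l₀ ∈ M := Finset.mem_filter.2 ⟨hl₀, Or.inr rfl⟩
  calc ∫ ω, exp (lam * ∑ l ∈ L, X (p l) ω * X (q l) ω) ∂μ
      ≤ exp (lam ^ 2 * c ^ 4 * #M ^ 2 / 2)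
          * ∫ ω, exp (lam * ∑ l ∈ L', X (p l) ω * X (q l) ω) ∂μ := by
        simp only [fun ω ↦ h_split fun i ↦ X i ω]
        exact integral_exp_mul_sum_add_mul_sum_le hc hXm hX hXr lam hL'v hr
    _ ≤ exp (lam ^ 2 * c ^ 4 * #M) * exp (lam ^ 2 * c ^ 4 * #L') := by
        gcongr
        · have hM_sq : (#M : ℝ) ^ 2 ≤ 2 * #M := by nlinarith
          nlinarith [mul_le_mul_of_nonneg_left hM_sq (by positivity : 0 ≤ lam ^ 2 * c ^ 4)]
        · exact ih L' (Finset.sdiff_ssubset hML ⟨l₀, hl₀M⟩) (hp.mono hL'L) (hq.mono hL'L)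
            fun l hl ↦ hpq l (hL'L hl)
    _ = exp (lam ^ 2 * c ^ 4 * #L) := by
        rw [← exp_add, ← h_card]; ring_nf

end Chaos

lemma ProbabilityTheory.HasSubgaussianMGF.measure_abs_ge_le {Ω : Type*} [MeasurableSpace Ω]
    {μ : Measure Ω} [IsFiniteMeasure μ] {Y : Ω → ℝ} {σ : ℝ≥0} (h : HasSubgaussianMGF Y σ μ)
    {ε : ℝ} (hε : 0 ≤ ε) :
    μ {ω | ε ≤ |Y ω|} ≤ ENNReal.ofReal (2 * exp (-ε ^ 2 / (2 * σ))) := by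
  have h_tail : ∀ {Y' : Ω → ℝ}, HasSubgaussianMGF Y' σ μ →
      μ {ω | ε ≤ Y' ω} ≤ ENNReal.ofReal (exp (-ε ^ 2 / (2 * σ))) := fun h' ↦ by
    rw [← ENNReal.ofReal_toReal (measure_ne_top μ _)]
    exact ENNReal.ofReal_le_ofReal (h'.measure_ge_le hε)
  calc μ {ω | ε ≤ |Y ω|} ≤ μ ({ω | ε ≤ Y ω} ∪ {ω | ε ≤ (-Y) ω}) :=
        measure_mono fun ω hω ↦ by
          rcases le_abs.1 (show ε ≤ |Y ω| from hω) with h' | h'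
          · exact Or.inl h'
          · exact Or.inr h'
    _ ≤ _ := (measure_union_le _ _).trans (by
        rw [two_mul, ENNReal.ofReal_add (exp_pos _).le (exp_pos _).le]
        exact add_le_add (h_tail h) (h_tail h.neg))

section ChaosTail

variable {Ω ι κ : Type*} [MeasurableSpace Ω] {μ : Measure Ω} [IsProbabilityMeasure μ]
  [Fintype ι] [DecidableEq ι] {X : ι → Ω → ℝ} {c : ℝ}

theorem hasSubgaussianMGF_sum_mul (hc : c ≠ 0) (hXm : ∀ i, Measurable (X i))
    (hX : iIndepFun X μ) (hXr : ∀ i, IsScaledRademacher μ c (X i)) {p q : κ → ι}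
    {L : Finset κ} (hp : Set.InjOn p L) (hq : Set.InjOn q L) (hpq : ∀ l ∈ L, p l ≠ q l) :
    HasSubgaussianMGF (fun ω ↦ ∑ l ∈ L, X (p l) ω * X (q l) ω) (2 * c ^ 4 * #L).toNNReal μ where
  integrable_exp_mul := integrable_exp_mul_of_ae_abs_le (by fun_prop)
    (ae_abs_sum_mul_le hc hXm hXr p q L)
  mgf_le t := by
    rw [Real.coe_toNNReal _ (by positivity)]
    refine (integral_exp_mul_sum_mul_le hc hXm hX hXr t L hp hq hpq).trans_eq ?_
    ring_nf

theorem measure_abs_sum_mul_ge_le (hc : c ≠ 0) (hXm : ∀ i, Measurable (X i))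
    (hX : iIndepFun X μ) (hXr : ∀ i, IsScaledRademacher μ c (X i)) {p q : κ → ι}
    {L : Finset κ} (hp : Set.InjOn p L) (hq : Set.InjOn q L) (hpq : ∀ l ∈ L, p l ≠ q l)
    {t : ℝ} (ht : 0 ≤ t) :
    μ {ω | t ≤ |∑ l ∈ L, X (p l) ω * X (q l) ω|}
      ≤ ENNReal.ofReal (2 * exp (-t ^ 2 / (4 * c ^ 4 * #L))) := by
  have h := (hasSubgaussianMGF_sum_mul hc hXm hX hXr hp hq hpq).measure_abs_ge_le ht
  rwa [Real.coe_toNNReal _ (by positivity), ← mul_assoc, ← mul_assoc,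
    show (2 : ℝ) * 2 = 4 by norm_num] at h

end ChaosTail

section Coherence

variable {M N : Type*} [Fintype M] [Fintype N]

lemma sum_mulVec_sq_eq (A : Matrix M N ℝ) (f : N → ℝ) :
    ∑ j, (A *ᵥ f) j ^ 2 = ∑ α, ∑ β, f α * f β * ∑ j, A j α * A j β := by
  simp only [mulVec, dotProduct, sq, Finset.sum_mul_sum]
  rw [Finset.sum_comm]
  refine Finset.sum_congr rfl fun α _ ↦ ?_
  rw [Finset.sum_comm]
  refine Finset.sum_congr rfl fun β _ ↦ ?_
  rw [Finset.mul_sum]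
  exact Finset.sum_congr rfl fun j _ ↦ by ring

lemma abs_sum_sum_mul_le (f : N → ℝ) {E : N → N → ℝ} {ε : ℝ} (hE : ∀ α β, |E α β| ≤ ε) :
    |∑ α, ∑ β, f α * f β * E α β| ≤ ε * (∑ α, |f α|) ^ 2 := by
  rw [sq, Finset.sum_mul_sum, Finset.mul_sum]
  refine (Finset.abs_sum_le_sum_abs _ _).trans (Finset.sum_le_sum fun α _ ↦ ?_)
  rw [Finset.mul_sum]
  refine (Finset.abs_sum_le_sum_abs _ _).trans (Finset.sum_le_sum fun β _ ↦ ?_)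
  rw [abs_mul, abs_mul, mul_comm ε]
  exact mul_le_mul_of_nonneg_left (hE α β) (by positivity)

lemma IsSparse.sq_sum_abs_le [DecidableEq N] {s : ℕ} {f : N → ℝ} (hf : IsSparse s f) :
    (∑ α, |f α|) ^ 2 ≤ s * ∑ α, f α ^ 2 := by
  obtain ⟨T, hT, hfT⟩ := hf
  rw [← Finset.sum_subset (Finset.subset_univ T) fun α _ hα ↦ by rw [hfT α hα, abs_zero]]
  calc (∑ α ∈ T, |f α|) ^ 2 ≤ #T * ∑ α ∈ T, |f α| ^ 2 := sq_sum_le_card_mul_sum_sq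
    _ ≤ s * ∑ α, f α ^ 2 := by
      simp only [sq_abs]
      gcongr
      exact Finset.subset_univ T

/-- Gershgorin: `‖A f‖² = ‖f‖² + fᵀ E f` with `|E α β| ≤ δ / s`, and `‖f‖₁² ≤ s ‖f‖₂²`. -/
theorem isRIP_of_coherence [DecidableEq N] (A : Matrix M N ℝ) {s : ℕ} {δ : ℝ} (hδ : 0 ≤ δ)
    (hnorm : ∀ α, ∑ j, A j α ^ 2 = 1)
    (hcoh : ∀ α β, α ≠ β → |∑ j, A j α * A j β| ≤ δ / s) : IsRIP A s δ := by
  intro f hf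
  set E : N → N → ℝ := fun α β ↦ ∑ j, A j α * A j β - if α = β then 1 else 0
  have hE : ∀ α β, |E α β| ≤ δ / s := fun α β ↦ by
    by_cases h : α = β
    · subst h; simp only [E, if_true, ← sq, hnorm, sub_self, abs_zero]; positivity
    · simpa [E, h] using hcoh α β h
  have h_quad : ∑ j, (A *ᵥ f) j ^ 2 = ∑ α, f α ^ 2 + ∑ α, ∑ β, f α * f β * E α β := by
    simp only [sum_mulVec_sq_eq, E, mul_sub, Finset.sum_sub_distrib, mul_ite, mul_one, mul_zero,
      Finset.sum_ite_eq, Finset.mem_univ, if_true]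
    ring_nf
  have h_err : |∑ α, ∑ β, f α * f β * E α β| ≤ δ * ∑ α, f α ^ 2 := by
    have hδs : δ / s * s ≤ δ := by
      rcases eq_or_ne (s : ℝ) 0 with h | h
      · simpa [h] using hδ
      · rw [div_mul_cancel₀ _ h]
    calc _ ≤ δ / s * (∑ α, |f α|) ^ 2 := abs_sum_sum_mul_le f hE
      _ ≤ δ / s * (s * ∑ α, f α ^ 2) := by gcongr; exact hf.sq_sum_abs_le
      _ ≤ δ * ∑ α, f α ^ 2 := by
        rw [← mul_assoc]; gcongr
  rw [h_quad]
  constructor <;> linarith [abs_le.1 h_err]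

end Coherence

theorem measure_not_isRIP_le {Ω M N : Type*} [MeasurableSpace Ω] {μ : Measure Ω} [Fintype M]
    [Fintype N] [DecidableEq N] (A : Ω → Matrix M N ℝ) {s : ℕ} {δ : ℝ} (hδ : 0 ≤ δ)
    (hnorm : ∀ᵐ ω ∂μ, ∀ α, ∑ j, A ω j α ^ 2 = 1) {ε : ℝ≥0∞}
    (hcoh : ∀ α β, α ≠ β → μ {ω | δ / s ≤ |∑ j, A ω j α * A ω j β|} ≤ ε) :
    μ {ω | ¬ IsRIP (A ω) s δ} ≤ Fintype.card N ^ 2 * ε := by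
  set bad : N × N → Set Ω := fun z ↦ {ω | δ / s ≤ |∑ j, A ω j z.1 * A ω j z.2|}
  have hsub : {ω | ¬ IsRIP (A ω) s δ}
      ⊆ {ω | ¬ ∀ α, ∑ j, A ω j α ^ 2 = 1} ∪ ⋃ z ∈ (Finset.univ : Finset N).offDiag, bad z := by
    intro ω hω
    by_contra h
    simp only [Set.mem_union, Set.mem_iUnion, Finset.mem_offDiag, Finset.mem_univ, true_and,
      not_or, not_not, not_exists, bad, Set.mem_ofPred_eq, not_le] at h
    exact hω (isRIP_of_coherence _ hδ h.1 fun α β hαβ ↦ (h.2 (α, β) hαβ).le)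
  have h_card : (#(Finset.univ : Finset N).offDiag : ℝ≥0∞) ≤ Fintype.card N ^ 2 := by
    rw [Finset.offDiag_card, Finset.card_univ, ← sq]
    exact_mod_cast Nat.sub_le _ _
  calc μ {ω | ¬ IsRIP (A ω) s δ}
      ≤ μ {ω | ¬ ∀ α, ∑ j, A ω j α ^ 2 = 1}
          + μ (⋃ z ∈ (Finset.univ : Finset N).offDiag, bad z) :=
        (measure_mono hsub).trans (measure_union_le _ _)
    _ ≤ 0 + ∑ z ∈ (Finset.univ : Finset N).offDiag, ε := by
        gcongr
        · exact (ae_iff.1 hnorm).le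
        · exact (measure_biUnion_finset_le _ _).trans
            (Finset.sum_le_sum fun z hz ↦ hcoh z.1 z.2 (Finset.mem_offDiag.1 hz).2.2)
    _ ≤ Fintype.card N ^ 2 * ε := by
        rw [zero_add, Finset.sum_const, nsmul_eq_mul]
        gcongr

theorem measure_not_isRIP_of_rademacher_le {Ω ι M N : Type*} [MeasurableSpace Ω]
    {μ : Measure Ω} [IsProbabilityMeasure μ] [Fintype ι] [DecidableEq ι] [Fintype M]
    [Fintype N] [DecidableEq N] {X : ι → Ω → ℝ} {c : ℝ} (hc : c ≠ 0)
    (hXm : ∀ i, Measurable (X i)) (hX : iIndepFun X μ) (hXr : ∀ i, IsScaledRademacher μ c (X i))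
    (P : N → M → ι) (hP_inj : ∀ α, Function.Injective (P α))
    (hP_ne : ∀ α β, α ≠ β → ∀ j, P α j ≠ P β j) (h_unit : Fintype.card M * c ^ 2 = 1)
    {s : ℕ} {δ : ℝ} (hδ : 0 ≤ δ) :
    μ {ω | ¬ IsRIP (Matrix.of fun j α ↦ X (P α j) ω) s δ}
      ≤ Fintype.card N ^ 2 * ENNReal.ofReal (2 * exp (-(δ / s) ^ 2 / (4 * c ^ 2))) := by
  refine measure_not_isRIP_le _ hδ ?_ fun α β hαβ ↦ ?_
  · filter_upwards [ae_forall_abs_eq hc hXm hXr] with ω hω α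
    simp only [Matrix.of_apply, ← sq_abs (X _ ω), hω, Finset.sum_const, Finset.card_univ,
      nsmul_eq_mul, sq_abs, h_unit]
  · have h := measure_abs_sum_mul_ge_le hc hXm hX hXr (L := Finset.univ)
      (hP_inj α).injOn (hP_inj β).injOn (fun j _ ↦ hP_ne α β hαβ j) (t := δ / s) (by positivity)
    rwa [Finset.card_univ, show 4 * c ^ 4 * (Fintype.card M : ℝ) = 4 * c ^ 2 by
      rw [← mul_one (4 * c ^ 2), ← h_unit]; ring] at h

section Cake

variable {n₁ n₂ d₁ d₂ B : ℕ}

def cakeMaskIndex (n₁ n₂ d₁ d₂ B : ℕ) (α : Fin B × (ZMod n₁ × ZMod n₂))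
    (l : Fin (n₁ / d₁) × Fin (n₂ / d₂)) : Fin B × (ZMod n₁ × ZMod n₂) :=
  (α.1, (((l.1 : ℕ) * d₁ : ℕ) : ZMod n₁) - α.2.1, (((l.2 : ℕ) * d₂ : ℕ) : ZMod n₂) - α.2.2)

lemma cakeMatrix_eq_of (h : Fin B → ZMod n₁ → ZMod n₂ → ℝ) :
    cakeMatrix n₁ n₂ d₁ d₂ B h = Matrix.of fun l α ↦
      h (cakeMaskIndex n₁ n₂ d₁ d₂ B α l).1 (cakeMaskIndex n₁ n₂ d₁ d₂ B α l).2.1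
        (cakeMaskIndex n₁ n₂ d₁ d₂ B α l).2.2 :=
  rfl

lemma ZMod.natCast_mul_injective {n d : ℕ} [NeZero n] (hd : d ∣ n) :
    Function.Injective fun x : Fin (n / d) ↦ (((x : ℕ) * d : ℕ) : ZMod n) := by
  have hd0 : 0 < d := Nat.pos_of_dvd_of_pos hd (NeZero.pos n)
  have hlt : ∀ x : Fin (n / d), (x : ℕ) * d < n := fun x ↦ by
    calc (x : ℕ) * d < (n / d) * d := Nat.mul_lt_mul_of_pos_right x.2 hd0
      _ = n := Nat.div_mul_cancel hd
  intro x y hxy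
  have h := congrArg ZMod.val hxy
  simp only [ZMod.val_cast_of_lt (hlt _)] at h
  exact Fin.ext (Nat.eq_of_mul_eq_mul_right hd0 h)

lemma cakeMaskIndex_injective [NeZero n₁] [NeZero n₂] (hd₁ : d₁ ∣ n₁) (hd₂ : d₂ ∣ n₂)
    (α : Fin B × (ZMod n₁ × ZMod n₂)) : Function.Injective (cakeMaskIndex n₁ n₂ d₁ d₂ B α) :=
  fun l l' h ↦ by
    simp only [cakeMaskIndex, Prod.mk.injEq, sub_left_inj, true_and] at h
    exact Prod.ext (ZMod.natCast_mul_injective hd₁ h.1) (ZMod.natCast_mul_injective hd₂ h.2)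

lemma cakeMaskIndex_ne {α β : Fin B × (ZMod n₁ × ZMod n₂)} (hαβ : α ≠ β)
    (l : Fin (n₁ / d₁) × Fin (n₂ / d₂)) :
    cakeMaskIndex n₁ n₂ d₁ d₂ B α l ≠ cakeMaskIndex n₁ n₂ d₁ d₂ B β l := fun h ↦ by
  simp only [cakeMaskIndex, Prod.mk.injEq, sub_right_inj] at h
  exact hαβ (Prod.ext h.1 (Prod.ext h.2.1 h.2.2))

lemma card_cakeRows [NeZero n₁] [NeZero n₂] (hd₁ : d₁ ∣ n₁) (hd₂ : d₂ ∣ n₂) :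
    (Fintype.card (Fin (n₁ / d₁) × Fin (n₂ / d₂)) : ℝ) = (n₁ * n₂ : ℝ) / (d₁ * d₂) := by
  have hd₁0 : (d₁ : ℝ) ≠ 0 := by exact_mod_cast (Nat.pos_of_dvd_of_pos hd₁ (NeZero.pos n₁)).ne'
  have hd₂0 : (d₂ : ℝ) ≠ 0 := by exact_mod_cast (Nat.pos_of_dvd_of_pos hd₂ (NeZero.pos n₂)).ne'
  rw [Fintype.card_prod, Fintype.card_fin, Fintype.card_fin, Nat.cast_mul, Nat.cast_div hd₁ hd₁0,
    Nat.cast_div hd₂ hd₂0]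
  field_simp

end Cake

lemma two_mul_sq_mul_exp_neg_lt_one {P E : ℝ} (hP : 2 < P) (hE : 3 * log P ≤ E) :
    2 * P ^ 2 * exp (-E) < 1 := by
  have hP0 : 0 < P := by linarith
  have h_exp : exp (-E) ≤ (P ^ 3)⁻¹ := by
    rw [← exp_log (pow_pos hP0 3), ← exp_neg, exp_le_exp, log_pow]
    push_cast; linarith
  calc 2 * P ^ 2 * exp (-E) ≤ 2 * P ^ 2 * (P ^ 3)⁻¹ := by gcongr
    _ = 2 / P := by field_simp
    _ < 1 := by rw [div_lt_one hP0]; exact hP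

lemma two_mul_sq_mul_exp_neg_lt_one_of_log_le {P N s δ c₁ c₂ : ℝ} (hP : 2 ≤ P) (hNP : N ≤ P)
    (hs : 1 ≤ s) (hδ : δ ^ 2 < 1) (hc₂ : 0 < c₂) (hc₂δ : c₂ ≤ δ ^ 2 / 16) (hc₁ : 3 / c₂ ≤ c₁)
    (hN : c₁ * s ^ 2 * log P ≤ N) :
    2 * P ^ 2 * exp (-(N * δ ^ 2 / (16 * s ^ 2))) < 1 := by
  have hlog : 0 < log P := log_pos (by linarith)
  have hs2 : 1 ≤ s ^ 2 := one_le_pow₀ hs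
  have hc₁c₂ : 3 ≤ c₁ * c₂ := (div_le_iff₀ hc₂).1 hc₁
  -- `c₁ ≥ 3 / c₂ ≥ 48`, so `N ≥ 48 log 2 > 2` rules out `P = 2`.
  have hc₁ : 48 ≤ c₁ := le_trans (by rw [le_div_iff₀ hc₂]; linarith) hc₁
  have hP2 : 2 < P := by
    have hlog2 : log 2 ≤ log P := log_le_log two_pos hP
    have : 48 * log 2 ≤ c₁ * s ^ 2 * log P := by
      have : 48 * 1 * log 2 ≤ c₁ * s ^ 2 * log P := by gcongr
      linarith
    linarith [log_two_gt_d9]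
  refine two_mul_sq_mul_exp_neg_lt_one hP2 ?_
  rw [le_div_iff₀ (by positivity)]
  calc 3 * log P * (16 * s ^ 2) ≤ c₁ * c₂ * log P * (16 * s ^ 2) := by gcongr
    _ = 16 * c₂ * (c₁ * s ^ 2 * log P) := by ring
    _ ≤ 16 * c₂ * N := by gcongr
    _ ≤ N * δ ^ 2 := by
        have : 0 ≤ N := le_trans (by positivity) hN
        nlinarith

theorem measure_not_isRIP_cakeMatrix_le {n₁ n₂ d₁ d₂ B : ℕ} [NeZero n₁] [NeZero n₂]
    (hd₁ : d₁ ∣ n₁) (hd₂ : d₂ ∣ n₂) (s : ℕ) {δ : ℝ} (hδ : 0 ≤ δ) {Ω : Type*}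
    [MeasurableSpace Ω] {μ : Measure Ω} [IsProbabilityMeasure μ]
    {H : Ω → Fin B → ZMod n₁ → ZMod n₂ → ℝ} (hmeas : ∀ t i j, Measurable fun ω ↦ H ω t i j)
    (hindep : iIndepFun (fun (tij : Fin B × (ZMod n₁ × ZMod n₂)) ω ↦ H ω tij.1 tij.2.1 tij.2.2) μ)
    (hdist : ∀ t i j, IsScaledRademacher μ √((d₁ * d₂ : ℝ) / (n₁ * n₂)) fun ω ↦ H ω t i j) :
    μ {ω | ¬ IsRIP (cakeMatrix n₁ n₂ d₁ d₂ B (H ω)) s δ}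
      ≤ ENNReal.ofReal (2 * ((n₁ : ℝ) * n₂) ^ 2 * (B : ℝ) ^ 2
          * exp (-((n₁ : ℝ) * n₂) * δ ^ 2 / (4 * ((d₁ : ℝ) * d₂) * (s : ℝ) ^ 2))) := by
  have hn₁ : (0 : ℝ) < n₁ := Nat.cast_pos.2 (NeZero.pos n₁)
  have hn₂ : (0 : ℝ) < n₂ := Nat.cast_pos.2 (NeZero.pos n₂)
  have hd₁' : (0 : ℝ) < d₁ := Nat.cast_pos.2 (Nat.pos_of_dvd_of_pos hd₁ (NeZero.pos n₁))
  have hd₂' : (0 : ℝ) < d₂ := Nat.cast_pos.2 (Nat.pos_of_dvd_of_pos hd₂ (NeZero.pos n₂))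
  set c := √((d₁ * d₂ : ℝ) / (n₁ * n₂))
  have hc2 : c ^ 2 = (d₁ * d₂ : ℝ) / (n₁ * n₂) := sq_sqrt (by positivity)
  have hc : c ≠ 0 := (sqrt_pos.2 (by positivity)).ne'
  have h_unit : (Fintype.card (Fin (n₁ / d₁) × Fin (n₂ / d₂)) : ℝ) * c ^ 2 = 1 := by
    rw [card_cakeRows hd₁ hd₂, hc2]; field_simp
  simp only [cakeMatrix_eq_of]
  refine (measure_not_isRIP_of_rademacher_le hc (fun i ↦ hmeas _ _ _) hindep
    (fun i ↦ hdist _ _ _) _ (cakeMaskIndex_injective hd₁ hd₂)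
    (fun _ _ h ↦ cakeMaskIndex_ne h) h_unit hδ).trans_eq ?_
  rw [← ENNReal.ofReal_natCast, ← ENNReal.ofReal_pow (by positivity),
    ← ENNReal.ofReal_mul (by positivity), hc2]
  congr 1
  simp only [Fintype.card_prod, Fintype.card_fin, ZMod.card]
  push_cast
  field_simp

theorem cake_not_RIP_union_bound_general
    (n₁ n₂ d₁ d₂ B : ℕ) [NeZero n₁] [NeZero n₂]
    (hd₁ : d₁ ∣ n₁) (hd₂ : d₂ ∣ n₂)
    (hn : 2 ≤ n₁ * n₂ * B)
    (s : ℕ) (hs : 1 ≤ s) (δs : ℝ) (hδs : δs ∈ Set.Ioo (0 : ℝ) 1)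
    (Ω : Type) (mΩ : MeasurableSpace Ω) (μ : Measure Ω) (hμ : IsProbabilityMeasure μ)
    (H : Ω → Fin B → ZMod n₁ → ZMod n₂ → ℝ)
    (hmeas : ∀ t i j, Measurable fun ω => H ω t i j)
    (hindep : iIndepFun
      (fun (tij : Fin B × (ZMod n₁ × ZMod n₂)) ω => H ω tij.1 tij.2.1 tij.2.2) μ)
    (hdist : ∀ t i j,
      μ {ω | H ω t i j = Real.sqrt ((d₁ * d₂ : ℝ) / (n₁ * n₂ : ℝ))} = 1/2 ∧
      μ {ω | H ω t i j = -Real.sqrt ((d₁ * d₂ : ℝ) / (n₁ * n₂ : ℝ))} = 1/2) :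
    μ {ω | ¬ IsRIP (cakeMatrix n₁ n₂ d₁ d₂ B (H ω)) s δs}
      ≤ ENNReal.ofReal
          (2 * ((n₁ : ℝ) * n₂) ^ 2 * (B : ℝ) ^ 2 *
            Real.exp (-((n₁ : ℝ) * n₂) * δs ^ 2 /
              (16 * ((d₁ : ℝ) * d₂) * (s : ℝ) ^ 2)))
    ∧
    ∀ c₁ c₂ : ℝ, 0 < c₂ → c₂ ≤ δs ^ 2 / 16 → 3 / c₂ ≤ c₁ →
      c₁ * (s : ℝ) ^ 2 * Real.log ((n₁ : ℝ) * n₂ * B)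
          ≤ ((n₁ : ℝ) * n₂) / ((d₁ : ℝ) * d₂) →
      2 * ((n₁ : ℝ) * n₂) ^ 2 * (B : ℝ) ^ 2 *
          Real.exp (-((n₁ : ℝ) * n₂) * δs ^ 2 /
            (16 * ((d₁ : ℝ) * d₂) * (s : ℝ) ^ 2)) < 1 := by
  obtain ⟨hδ0, hδ1⟩ := hδs
  have hd : (1 : ℝ) ≤ d₁ * d₂ := one_le_mul_of_one_le_of_one_le
    (Nat.one_le_cast.2 (Nat.pos_of_dvd_of_pos hd₁ (NeZero.pos n₁)))
    (Nat.one_le_cast.2 (Nat.pos_of_dvd_of_pos hd₂ (NeZero.pos n₂)))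
  have hds : (0 : ℝ) < d₁ * d₂ * s ^ 2 := mul_pos (by linarith) (pow_pos (Nat.cast_pos.2 hs) 2)
  refine ⟨(measure_not_isRIP_cakeMatrix_le hd₁ hd₂ s hδ0.le hmeas hindep hdist).trans ?_,
    fun c₁ c₂ hc₂ hc₂δ hc₁ hN ↦ ?_⟩
  · gcongr ENNReal.ofReal (2 * _ * _ * exp ?_)
    simp only [neg_mul, neg_div, neg_le_neg_iff]
    exact div_le_div_of_nonneg_left (by positivity) (by linarith) (by linarith)
  have hB : (1 : ℝ) ≤ B := Nat.one_le_cast.2 (Nat.pos_of_ne_zero fun h ↦ by simp [h] at hn)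
  have hNP : (n₁ * n₂ : ℝ) / (d₁ * d₂) ≤ n₁ * n₂ * B :=
    (div_le_self (by positivity) hd).trans (le_mul_of_one_le_right (by positivity) hB)
  convert two_mul_sq_mul_exp_neg_lt_one_of_log_le (by exact_mod_cast hn) hNP
    (by exact_mod_cast hs) (by nlinarith) hc₂ hc₂δ hc₁ hN using 2
  · ring
  · congr 1; field_simp

/-- union bound for the CAKE sensing matrix.  With jointly i.i.d. `±√(d/n)`
mask entries and `nB ≥ 2`, `P(A does not satisfy RIP(s, δs)) ≤ 2 n² B² exp(-n δs²/(16 d s²))`;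
in particular, for `c₂ ≤ δs²/16` and `c₁ ≥ 3/c₂`, the bound is `< 1` when
`n/d ≥ c₁ s² log(nB)`. -/
theorem cake_not_RIP_union_bound
    (n₁ n₂ d₁ d₂ B : ℕ) [NeZero n₁] [NeZero n₂]
    (hd₁ : d₁ ∣ n₁) (hd₂ : d₂ ∣ n₂) (hd₁0 : 0 < d₁) (hd₂0 : 0 < d₂) (hB : 0 < B)
    (hn : 2 ≤ n₁ * n₂ * B)
    (s : ℕ) (hs : 1 ≤ s) (δs : ℝ) (hδs : δs ∈ Set.Ioo (0 : ℝ) 1)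
    (Ω : Type) (mΩ : MeasurableSpace Ω) (μ : Measure Ω) (hμ : IsProbabilityMeasure μ)
    (H : Ω → Fin B → ZMod n₁ → ZMod n₂ → ℝ)
    (hmeas : ∀ t i j, Measurable fun ω => H ω t i j)
    (hindep : iIndepFun
      (fun (tij : Fin B × (ZMod n₁ × ZMod n₂)) ω => H ω tij.1 tij.2.1 tij.2.2) μ)
    (hdist : ∀ t i j,
      μ {ω | H ω t i j = Real.sqrt ((d₁ * d₂ : ℝ) / (n₁ * n₂ : ℝ))} = 1/2 ∧
      μ {ω | H ω t i j = -Real.sqrt ((d₁ * d₂ : ℝ) / (n₁ * n₂ : ℝ))} = 1/2) :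
    μ {ω | ¬ IsRIP (cakeMatrix n₁ n₂ d₁ d₂ B (H ω)) s δs}
      ≤ ENNReal.ofReal
          (2 * ((n₁ : ℝ) * n₂) ^ 2 * (B : ℝ) ^ 2 *
            Real.exp (-((n₁ : ℝ) * n₂) * δs ^ 2 /
              (16 * ((d₁ : ℝ) * d₂) * (s : ℝ) ^ 2)))
    ∧
    ∀ c₁ c₂ : ℝ, 0 < c₂ → c₂ ≤ δs ^ 2 / 16 → 3 / c₂ ≤ c₁ →
      c₁ * (s : ℝ) ^ 2 * Real.log ((n₁ : ℝ) * n₂ * B)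
          ≤ ((n₁ : ℝ) * n₂) / ((d₁ : ℝ) * d₂) →
      2 * ((n₁ : ℝ) * n₂) ^ 2 * (B : ℝ) ^ 2 *
          Real.exp (-((n₁ : ℝ) * n₂) * δs ^ 2 /
            (16 * ((d₁ : ℝ) * d₂) * (s : ℝ) ^ 2)) < 1 :=
  cake_not_RIP_union_bound_general n₁ n₂ d₁ d₂ B hd₁ hd₂ hn s hs δs hδs Ω mΩ μ hμ H hmeas hindep
    hdist
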